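/- arXiv:1310.8504 — 4 statements merged into one kernel-verified Lean document; each statement's English description precedes it below -/
import Mathlib

section
/- Let Ȧ₁ and Ȧ₂ be densely defined closed symmetric operators with deficiency indices (1,1) on complex Hilbert spaces H₁ and H₂, and let g₊ᵏ ∈ ker((Ȧₖ)* − i), g₋ᵏ ∈ ker((Ȧₖ)* + i) be unit vectors, k = 1,2. For α, β ∈ [0, π) set f = (sin α · g₊¹ − sin β · g₋¹) ⊕ (cos α · g₊² − cos β · g₋²) ∈ H₁ ⊕ H₂. Then f ∈ Dom((Ȧ₁ ⊕ Ȧ₂)*) and Im⟨(Ȧ₁ ⊕ Ȧ₂)* f, f⟩ = 0; consequently the restriction Ȧ of (Ȧ₁ ⊕ Ȧ₂)* to Dom(Ȧ₁) ⊕ Dom(Ȧ₂) ∔ span{f} is a symmetric operator. -/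
noncomputable section

open Complex

/-- The inner product, linear in the **first** argument (the convention of the paper). -/
def ip {H : Type*} [NormedAddCommGroup H] [InnerProductSpace ℂ H] (x y : H) : ℂ :=
  @inner ℂ H _ y x

variable {H H₁ H₂ : Type*}
  [NormedAddCommGroup H] [InnerProductSpace ℂ H] [CompleteSpace H]
  [NormedAddCommGroup H₁] [InnerProductSpace ℂ H₁] [CompleteSpace H₁]
  [NormedAddCommGroup H₂] [InnerProductSpace ℂ H₂] [CompleteSpace H₂]

/-- The deficiency subspace `ker (T* - z)` of a densely defined operator `T`,
as a subset of the ambient space. -/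
def defSet (T : H →ₗ.[ℂ] H) (z : ℂ) : Set H :=
  {g | ∃ hg : g ∈ T.adjoint.domain, T.adjoint ⟨g, hg⟩ = z • g}

/-- `g` is a nonzero vector spanning the deficiency subspace `ker (T* - z)`. -/
def SpansDefSet (T : H →ₗ.[ℂ] H) (z : ℂ) (g : H) : Prop :=
  g ≠ 0 ∧ defSet T z = {h | ∃ c : ℂ, h = c • g}

/-- `T` has deficiency indices `(1,1)`. -/
def HasDefIndicesOneOne (T : H →ₗ.[ℂ] H) : Prop :=
  (∃ g, SpansDefSet T I g) ∧ (∃ g, SpansDefSet T (-I) g)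

/-- A partially defined operator is symmetric. -/
def IsSymmetricOp (T : H →ₗ.[ℂ] H) : Prop :=
  ∀ x y : T.domain, ip (T x) (y : H) = ip (x : H) (T y)

/-- A partially defined operator is self-adjoint. -/
def IsSelfAdjointOp (T : H →ₗ.[ℂ] H) : Prop :=
  Dense (T.domain : Set H) ∧ T.adjoint = T

/-- A partially defined operator is dissipative: `Im ⟨T x, x⟩ ≥ 0`. -/
def IsDissipativeOp (T : H →ₗ.[ℂ] H) : Prop :=
  ∀ x : T.domain, 0 ≤ (ip (T x) (x : H)).im

/-- A partially defined operator is maximal dissipative: it is dissipative and admits no proper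
dissipative extension. -/
def IsMaximalDissipativeOp (T : H →ₗ.[ℂ] H) : Prop :=
  IsDissipativeOp T ∧ ∀ S : H →ₗ.[ℂ] H, IsDissipativeOp S → T ≤ S → S = T

/-- The domain of the direct (orthogonal) sum of two partially defined operators. -/
def prodDomain (T₁ : H₁ →ₗ.[ℂ] H₁) (T₂ : H₂ →ₗ.[ℂ] H₂) :
    Submodule ℂ (WithLp 2 (H₁ × H₂)) where
  carrier := {x | x.fst ∈ T₁.domain ∧ x.snd ∈ T₂.domain}
  add_mem' := fun ha hb => ⟨Submodule.add_mem _ ha.1 hb.1, Submodule.add_mem _ ha.2 hb.2⟩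
  zero_mem' := ⟨Submodule.zero_mem _, Submodule.zero_mem _⟩
  smul_mem' := fun c x hx => ⟨Submodule.smul_mem _ c hx.1, Submodule.smul_mem _ c hx.2⟩

/-- First-component projection of the domain of a direct sum. -/
def fstD (T₁ : H₁ →ₗ.[ℂ] H₁) (T₂ : H₂ →ₗ.[ℂ] H₂) :
    ↥(prodDomain T₁ T₂) →ₗ[ℂ] T₁.domain where
  toFun x := ⟨x.val.fst, x.prop.1⟩
  map_add' _ _ := rfl
  map_smul' _ _ := rfl

/-- Second-component projection of the domain of a direct sum. -/
def sndD (T₁ : H₁ →ₗ.[ℂ] H₁) (T₂ : H₂ →ₗ.[ℂ] H₂) :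
    ↥(prodDomain T₁ T₂) →ₗ[ℂ] T₂.domain where
  toFun x := ⟨x.val.snd, x.prop.2⟩
  map_add' _ _ := rfl
  map_smul' _ _ := rfl

/-- The direct (orthogonal) sum `T₁ ⊕ T₂` of two partially defined operators, acting
componentwise on `Dom T₁ ⊕ Dom T₂ ⊆ H₁ ⊕ H₂`. -/
def prodOp (T₁ : H₁ →ₗ.[ℂ] H₁) (T₂ : H₂ →ₗ.[ℂ] H₂) :
    WithLp 2 (H₁ × H₂) →ₗ.[ℂ] WithLp 2 (H₁ × H₂) where
  domain := prodDomain T₁ T₂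
  toFun := (WithLp.linearEquiv 2 ℂ (H₁ × H₂)).symm.toLinearMap ∘ₗ
    ((T₁.toFun ∘ₗ fstD T₁ T₂).prod (T₂.toFun ∘ₗ sndD T₁ T₂))

/-- The canonical embedding of `H₁` into `H₁ ⊕ H₂`. -/
def embFst (x : H₁) : WithLp 2 (H₁ × H₂) := (WithLp.equiv 2 (H₁ × H₂)).symm (x, 0)

/-- Builds an element of `H₁ ⊕ H₂` from components. -/
def pairL2 (x : H₁) (y : H₂) : WithLp 2 (H₁ × H₂) := (WithLp.equiv 2 (H₁ × H₂)).symm (x, y)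

/-!
If `g₊ ∈ ker (T* - i)` and `g₋ ∈ ker (T* + i)` are unit vectors and `s, t` are real, then
`T* (s g₊ - t g₋) = i (s g₊ + t g₋)`, and `Im ⟨T* (s g₊ - t g₋), s g₊ - t g₋⟩ = s² - t²`: the cross
terms in `⟨g₊, g₋⟩` only contribute to the real part. The adjoint of `Ȧ₁ ⊕ Ȧ₂` acts componentwise
on pairs, so for `f` the imaginary part is `sin² α - sin² β + cos² α - cos² β = 0`.

For a symmetric `T`, the boundary form `⟨T* x, y⟩ - ⟨x, T* y⟩` is sesquilinear on `Dom T*` and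
vanishes as soon as one argument lies in `Dom T`; if moreover `⟨T* f, f⟩` is real, it vanishes at
`(f, f)`, hence on all of `Dom T ∔ span {f}`.
-/

open LinearPMap

section

variable {E E₁ E₂ : Type*} [NormedAddCommGroup E] [InnerProductSpace ℂ E]
  [NormedAddCommGroup E₁] [InnerProductSpace ℂ E₁] [NormedAddCommGroup E₂] [InnerProductSpace ℂ E₂]

theorem ip_eq_ip_of_im_eq_zero {x y : E} (h : (ip x y).im = 0) : ip x y = ip y x := by
  rw [← Complex.conj_eq_iff_im.mpr h]
  exact inner_conj_symm x y

theorem re_inner_sub_add (a b : E) : (inner ℂ (a - b) (a + b)).re = ‖a‖ ^ 2 - ‖b‖ ^ 2 := by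
  have hsymm := inner_re_symm (𝕜 := ℂ) a b
  have ha := inner_self_eq_norm_sq (𝕜 := ℂ) a
  have hb := inner_self_eq_norm_sq (𝕜 := ℂ) b
  simp only [inner_sub_left, inner_add_right, Complex.sub_re, Complex.add_re]
  simp only [RCLike.re_to_complex] at hsymm ha hb
  linarith

theorem im_ip_I_smul_add_sub (u v : E) (s t : ℝ) :
    (ip (I • ((s : ℂ) • u + (t : ℂ) • v)) ((s : ℂ) • u - (t : ℂ) • v)).im =
      s ^ 2 * ‖u‖ ^ 2 - t ^ 2 * ‖v‖ ^ 2 := by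
  rw [ip, inner_smul_right, Complex.I_mul_im, re_inner_sub_add, norm_smul, norm_smul,
    Complex.norm_real, Complex.norm_real, Real.norm_eq_abs, Real.norm_eq_abs, mul_pow, mul_pow,
    sq_abs, sq_abs]

theorem ip_pairL2 (x₁ y₁ : E₁) (x₂ y₂ : E₂) :
    ip (pairL2 x₁ x₂) (pairL2 y₁ y₂) = ip x₁ y₁ + ip x₂ y₂ := rfl

theorem isSymmetricOp_iff_isFormalAdjoint {T : E →ₗ.[ℂ] E} :
    IsSymmetricOp T ↔ T.IsFormalAdjoint T :=
  ⟨fun h x y => (h y x).symm, fun h x y => (h y x).symm⟩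

theorem IsSymmetricOp.le_adjoint [CompleteSpace E] {T : E →ₗ.[ℂ] E} (hs : IsSymmetricOp T)
    (hd : Dense (T.domain : Set E)) : T ≤ T† :=
  (isSymmetricOp_iff_isFormalAdjoint.mp hs).le_adjoint hd

theorem exists_eq_add_smul_of_mem_sup_span [CompleteSpace E] {T : E →ₗ.[ℂ] E} (hle : T ≤ T†)
    {f : E} (hf : f ∈ T†.domain) (x : T†.domain)
    (hx : (x : E) ∈ T.domain ⊔ Submodule.span ℂ {f}) :
    ∃ (u : T.domain) (a : ℂ), (x : E) = u + a • f ∧ T† x = T u + a • T† ⟨f, hf⟩ := by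
  obtain ⟨u, hu, v, hv, hx⟩ := Submodule.mem_sup.mp hx
  obtain ⟨a, rfl⟩ := Submodule.mem_span_singleton.mp hv
  have hsplit : x = ⟨u, hle.1 hu⟩ + a • ⟨f, hf⟩ := Subtype.ext hx.symm
  refine ⟨⟨u, hu⟩, a, hx.symm, ?_⟩
  rw [hsplit, LinearPMap.map_add, LinearPMap.map_smul, ← hle.2 (x := ⟨u, hu⟩) rfl]

theorem IsSymmetricOp.adjoint_domRestrict_sup_span [CompleteSpace E] {T : E →ₗ.[ℂ] E}
    (hs : IsSymmetricOp T) (hd : Dense (T.domain : Set E)) {f : E} (hf : f ∈ T†.domain)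
    (him : (ip (T† ⟨f, hf⟩) f).im = 0) :
    IsSymmetricOp (T†.domRestrict (T.domain ⊔ Submodule.span ℂ {f})) := by
  have hle := hs.le_adjoint hd
  have hff := ip_eq_ip_of_im_eq_zero him
  have hfu : ∀ u : T.domain, inner ℂ f (T u) = inner ℂ (T† ⟨f, hf⟩) (u : E) := fun u =>
    (adjoint_isFormalAdjoint hd ⟨f, hf⟩ u).symm
  have huf : ∀ u : T.domain, inner ℂ (u : E) (T† ⟨f, hf⟩) = inner ℂ (T u) f := fun u =>
    ((adjoint_isFormalAdjoint hd).symm u ⟨f, hf⟩).symm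
  intro x y
  obtain ⟨u, a, hxu, hx⟩ := exists_eq_add_smul_of_mem_sup_span hle hf ⟨x, x.2.2⟩ x.2.1
  obtain ⟨v, b, hyv, hy⟩ := exists_eq_add_smul_of_mem_sup_span hle hf ⟨y, y.2.2⟩ y.2.1
  have hrx : T†.domRestrict _ x = T† ⟨x, x.2.2⟩ := domRestrict_apply rfl
  have hry : T†.domRestrict _ y = T† ⟨y, y.2.2⟩ := domRestrict_apply rfl
  rw [hrx, hry, hx, hy, hxu, hyv]
  simp only [ip, inner_add_left, inner_add_right, inner_smul_left, inner_smul_right] at hff ⊢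
  have huv : inner ℂ (v : E) (T u) = inner ℂ (T v) (u : E) := hs u v
  linear_combination huv + (starRingEnd ℂ) b * hfu u + a * huf v
    + a * (starRingEnd ℂ) b * hff

theorem adjoint_apply_smul_sub_smul_of_mem_defSet [CompleteSpace E] {T : E →ₗ.[ℂ] E} {gp gm : E}
    (hgp : gp ∈ defSet T I) (hgm : gm ∈ defSet T (-I)) (s t : ℂ) :
    ∃ h : s • gp - t • gm ∈ T†.domain, T† ⟨_, h⟩ = I • (s • gp + t • gm) := by
  obtain ⟨hp, ep⟩ := hgp
  obtain ⟨hm, em⟩ := hgm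
  refine ⟨Submodule.sub_mem _ (Submodule.smul_mem _ _ hp) (Submodule.smul_mem _ _ hm), ?_⟩
  have hsplit : (⟨s • gp - t • gm, _⟩ : T†.domain) = s • ⟨gp, hp⟩ - t • ⟨gm, hm⟩ := rfl
  rw [hsplit, LinearPMap.map_sub, LinearPMap.map_smul, LinearPMap.map_smul, ep, em]
  module

theorem im_ip_adjoint_smul_sub_smul_of_mem_defSet [CompleteSpace E] {T : E →ₗ.[ℂ] E}
    {gp gm : E} (hgp : gp ∈ defSet T I) (hgm : gm ∈ defSet T (-I)) (hnp : ‖gp‖ = 1)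
    (hnm : ‖gm‖ = 1) (s t : ℝ) :
    ∃ h : (s : ℂ) • gp - (t : ℂ) • gm ∈ T†.domain,
      (ip (T† ⟨_, h⟩) ((s : ℂ) • gp - (t : ℂ) • gm)).im = s ^ 2 - t ^ 2 := by
  obtain ⟨h, hT⟩ := adjoint_apply_smul_sub_smul_of_mem_defSet hgp hgm s t
  refine ⟨h, ?_⟩
  rw [hT, im_ip_I_smul_add_sub, hnp, hnm]
  ring

theorem dense_prodDomain {T₁ : E₁ →ₗ.[ℂ] E₁} {T₂ : E₂ →ₗ.[ℂ] E₂}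
    (h₁ : Dense (T₁.domain : Set E₁)) (h₂ : Dense (T₂.domain : Set E₂)) :
    Dense ((prodOp T₁ T₂).domain : Set (WithLp 2 (E₁ × E₂))) :=
  (h₁.prod h₂).preimage (WithLp.prodContinuousLinearEquiv 2 ℂ E₁ E₂).toHomeomorph.isOpenMap

theorem isSymmetricOp_prodOp {T₁ : E₁ →ₗ.[ℂ] E₁} {T₂ : E₂ →ₗ.[ℂ] E₂} (hs₁ : IsSymmetricOp T₁)
    (hs₂ : IsSymmetricOp T₂) : IsSymmetricOp (prodOp T₁ T₂) := fun x y =>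
  congrArg₂ HAdd.hAdd (hs₁ ⟨x.1.fst, x.2.1⟩ ⟨y.1.fst, y.2.1⟩)
    (hs₂ ⟨x.1.snd, x.2.2⟩ ⟨y.1.snd, y.2.2⟩)

theorem pairL2_mem_adjoint_domain_prodOp [CompleteSpace E₁] [CompleteSpace E₂]
    {T₁ : E₁ →ₗ.[ℂ] E₁} {T₂ : E₂ →ₗ.[ℂ] E₂}
    (h₁ : Dense (T₁.domain : Set E₁)) (h₂ : Dense (T₂.domain : Set E₂))
    {x₁ : E₁} {x₂ : E₂} (hx₁ : x₁ ∈ T₁†.domain) (hx₂ : x₂ ∈ T₂†.domain) :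
    ∃ h : pairL2 x₁ x₂ ∈ (prodOp T₁ T₂)†.domain,
      (prodOp T₁ T₂)† ⟨_, h⟩ = pairL2 (T₁† ⟨x₁, hx₁⟩) (T₂† ⟨x₂, hx₂⟩) := by
  have key : ∀ u : (prodOp T₁ T₂).domain,
      inner ℂ (pairL2 (T₁† ⟨x₁, hx₁⟩) (T₂† ⟨x₂, hx₂⟩)) (u : WithLp 2 (E₁ × E₂)) =
        inner ℂ (pairL2 x₁ x₂) (prodOp T₁ T₂ u) := fun u =>
    congrArg₂ HAdd.hAdd (adjoint_isFormalAdjoint h₁ ⟨x₁, hx₁⟩ ⟨u.1.fst, u.2.1⟩)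
      (adjoint_isFormalAdjoint h₂ ⟨x₂, hx₂⟩ ⟨u.1.snd, u.2.2⟩)
  have hmem := mem_adjoint_domain_of_exists _ ⟨_, key⟩
  exact ⟨hmem, adjoint_apply_eq (dense_prodDomain h₁ h₂) ⟨_, hmem⟩ key⟩

end

theorem statement0_general
    (B₁ : H₁ →ₗ.[ℂ] H₁) (B₂ : H₂ →ₗ.[ℂ] H₂)
    (hd₁ : Dense (B₁.domain : Set H₁)) (hd₂ : Dense (B₂.domain : Set H₂))
    (hs₁ : IsSymmetricOp B₁) (hs₂ : IsSymmetricOp B₂)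
    (gp₁ gm₁ : H₁) (gp₂ gm₂ : H₂)
    (hgp₁ : gp₁ ∈ defSet B₁ Complex.I) (hgm₁ : gm₁ ∈ defSet B₁ (-Complex.I))
    (hgp₂ : gp₂ ∈ defSet B₂ Complex.I) (hgm₂ : gm₂ ∈ defSet B₂ (-Complex.I))
    (hnp₁ : ‖gp₁‖ = 1) (hnm₁ : ‖gm₁‖ = 1) (hnp₂ : ‖gp₂‖ = 1) (hnm₂ : ‖gm₂‖ = 1)
    (α β : ℝ)
    (f : WithLp 2 (H₁ × H₂))
    (hf : f = pairL2 ((Real.sin α : ℂ) • gp₁ - (Real.sin β : ℂ) • gm₁)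
      ((Real.cos α : ℂ) • gp₂ - (Real.cos β : ℂ) • gm₂)) :
    ∃ hfd : f ∈ (prodOp B₁ B₂).adjoint.domain,
      (ip ((prodOp B₁ B₂).adjoint ⟨f, hfd⟩) f).im = 0 ∧
      IsSymmetricOp (((prodOp B₁ B₂).adjoint).domRestrict
        (prodDomain B₁ B₂ ⊔ Submodule.span ℂ {f})) := by
  subst hf
  set f₁ : H₁ := (Real.sin α : ℂ) • gp₁ - (Real.sin β : ℂ) • gm₁
  set f₂ : H₂ := (Real.cos α : ℂ) • gp₂ - (Real.cos β : ℂ) • gm₂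
  obtain ⟨hf₁, him₁⟩ := im_ip_adjoint_smul_sub_smul_of_mem_defSet hgp₁ hgm₁ hnp₁ hnm₁
    (Real.sin α) (Real.sin β)
  obtain ⟨hf₂, him₂⟩ := im_ip_adjoint_smul_sub_smul_of_mem_defSet hgp₂ hgm₂ hnp₂ hnm₂
    (Real.cos α) (Real.cos β)
  obtain ⟨hfd, hTf⟩ := pairL2_mem_adjoint_domain_prodOp hd₁ hd₂ hf₁ hf₂
  have him : (ip ((prodOp B₁ B₂)† ⟨_, hfd⟩) (pairL2 f₁ f₂)).im = 0 := by
    rw [hTf, ip_pairL2, Complex.add_im, him₁, him₂]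
    linear_combination Real.sin_sq_add_cos_sq α - Real.sin_sq_add_cos_sq β
  exact ⟨hfd, him, (isSymmetricOp_prodOp hs₁ hs₂).adjoint_domRestrict_sup_span
    (dense_prodDomain hd₁ hd₂) hfd him⟩

/-- If `Ȧ₁, Ȧ₂` are densely defined closed symmetric operators with deficiency
indices `(1,1)` and `g₊ᵏ, g₋ᵏ` are unit deficiency vectors, then for `α, β ∈ [0, π)` the vector
`f = (sin α g₊¹ − sin β g₋¹) ⊕ (cos α g₊² − cos β g₋²)` lies in `Dom((Ȧ₁ ⊕ Ȧ₂)*)`,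
`Im ⟨(Ȧ₁ ⊕ Ȧ₂)* f, f⟩ = 0`, and the restriction of `(Ȧ₁ ⊕ Ȧ₂)*` to
`Dom(Ȧ₁) ⊕ Dom(Ȧ₂) ∔ span{f}` is symmetric. -/
theorem statement0
    (B₁ : H₁ →ₗ.[ℂ] H₁) (B₂ : H₂ →ₗ.[ℂ] H₂)
    (hd₁ : Dense (B₁.domain : Set H₁)) (hd₂ : Dense (B₂.domain : Set H₂))
    (hc₁ : B₁.IsClosed) (hc₂ : B₂.IsClosed)
    (hs₁ : IsSymmetricOp B₁) (hs₂ : IsSymmetricOp B₂)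
    (hi₁ : HasDefIndicesOneOne B₁) (hi₂ : HasDefIndicesOneOne B₂)
    (gp₁ gm₁ : H₁) (gp₂ gm₂ : H₂)
    (hgp₁ : gp₁ ∈ defSet B₁ Complex.I) (hgm₁ : gm₁ ∈ defSet B₁ (-Complex.I))
    (hgp₂ : gp₂ ∈ defSet B₂ Complex.I) (hgm₂ : gm₂ ∈ defSet B₂ (-Complex.I))
    (hnp₁ : ‖gp₁‖ = 1) (hnm₁ : ‖gm₁‖ = 1) (hnp₂ : ‖gp₂‖ = 1) (hnm₂ : ‖gm₂‖ = 1)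
    (α β : ℝ) (hα : α ∈ Set.Ico 0 Real.pi) (hβ : β ∈ Set.Ico 0 Real.pi)
    (f : WithLp 2 (H₁ × H₂))
    (hf : f = pairL2 ((Real.sin α : ℂ) • gp₁ - (Real.sin β : ℂ) • gm₁)
      ((Real.cos α : ℂ) • gp₂ - (Real.cos β : ℂ) • gm₂)) :
    ∃ hfd : f ∈ (prodOp B₁ B₂).adjoint.domain,
      (ip ((prodOp B₁ B₂).adjoint ⟨f, hfd⟩) f).im = 0 ∧
      IsSymmetricOp (((prodOp B₁ B₂).adjoint).domRestrict
        (prodDomain B₁ B₂ ⊔ Submodule.span ℂ {f})) :=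
  statement0_general B₁ B₂ hd₁ hd₂ hs₁ hs₂ gp₁ gm₁ gp₂ gm₂ hgp₁ hgm₁ hgp₂ hgm₂ hnp₁ hnm₁ hnp₂ hnm₂ α
    β f hf
end
end

section
/- Let M₁, M₂ ∈ ℂ with Im M₁ > 0 and Im M₂ > 0, let α ∈ ℝ, and set sₖ = (Mₖ − i)/(Mₖ + i) for k = 1,2. Then the denominators below are nonzero and (cos²α · M₁ + sin²α · M₂ − i)/(cos²α · M₁ + sin²α · M₂ + i) = (cos²α · s₁ − s₁s₂ + sin²α · s₂)/(1 − (sin²α · s₁ + cos²α · s₂)). -/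
/-- The Cayley transform intertwines convex combinations of Weyl–Titchmarsh
functions with the corresponding combination of Livšic functions. -/
theorem statement5 (M₁ M₂ : ℂ) (hM₁ : 0 < M₁.im) (hM₂ : 0 < M₂.im) (α : ℝ)
    (s₁ s₂ : ℂ)
    (hs₁ : s₁ = (M₁ - Complex.I) / (M₁ + Complex.I))
    (hs₂ : s₂ = (M₂ - Complex.I) / (M₂ + Complex.I)) :
    M₁ + Complex.I ≠ 0 ∧ M₂ + Complex.I ≠ 0 ∧
    ((Real.cos α : ℂ) ^ 2 * M₁ + (Real.sin α : ℂ) ^ 2 * M₂ + Complex.I ≠ 0) ∧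
    (1 - ((Real.sin α : ℂ) ^ 2 * s₁ + (Real.cos α : ℂ) ^ 2 * s₂) ≠ 0) ∧
    ((Real.cos α : ℂ) ^ 2 * M₁ + (Real.sin α : ℂ) ^ 2 * M₂ - Complex.I) /
      ((Real.cos α : ℂ) ^ 2 * M₁ + (Real.sin α : ℂ) ^ 2 * M₂ + Complex.I) =
      ((Real.cos α : ℂ) ^ 2 * s₁ - s₁ * s₂ + (Real.sin α : ℂ) ^ 2 * s₂) /
      (1 - ((Real.sin α : ℂ) ^ 2 * s₁ + (Real.cos α : ℂ) ^ 2 * s₂)) := by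
  have hc : (0:ℝ) ≤ Real.cos α ^ 2 := sq_nonneg _
  have hs : (0:ℝ) ≤ Real.sin α ^ 2 := sq_nonneg _
  have h1 : M₁ + Complex.I ≠ 0 := by
    intro h
    have := congrArg Complex.im h
    simp at this
    linarith
  have h2 : M₂ + Complex.I ≠ 0 := by
    intro h
    have := congrArg Complex.im h
    simp at this
    linarith
  have h3 : (Real.cos α : ℂ) ^ 2 * M₁ + (Real.sin α : ℂ) ^ 2 * M₂ + Complex.I ≠ 0 := by
    intro h
    rw [show ((Real.cos α : ℂ)) ^ 2 = ((Real.cos α ^ 2 : ℝ) : ℂ) by norm_cast,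
      show ((Real.sin α : ℂ)) ^ 2 = ((Real.sin α ^ 2 : ℝ) : ℂ) by norm_cast] at h
    have := congrArg Complex.im h
    simp only [Complex.add_re, Complex.add_im, Complex.sub_re, Complex.sub_im, Complex.mul_re, Complex.mul_im, Complex.ofReal_re, Complex.ofReal_im, Complex.I_re, Complex.I_im, Complex.one_re, Complex.one_im, Complex.zero_re, Complex.zero_im, mul_zero, zero_mul, mul_one, add_zero, zero_add, sub_zero, zero_sub] at this
    nlinarith [mul_nonneg hc hM₁.le, mul_nonneg hs hM₂.le]
  have hN : Complex.I * ((Real.cos α : ℂ) ^ 2 * M₁ + (Real.sin α : ℂ) ^ 2 * M₂) - 1 ≠ 0 := by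
    intro h
    rw [show ((Real.cos α : ℂ)) ^ 2 = ((Real.cos α ^ 2 : ℝ) : ℂ) by norm_cast,
      show ((Real.sin α : ℂ)) ^ 2 = ((Real.sin α ^ 2 : ℝ) : ℂ) by norm_cast] at h
    have := congrArg Complex.re h
    simp only [Complex.add_re, Complex.add_im, Complex.sub_re, Complex.sub_im, Complex.mul_re, Complex.mul_im, Complex.ofReal_re, Complex.ofReal_im, Complex.I_re, Complex.I_im, Complex.one_re, Complex.one_im, Complex.zero_re, Complex.zero_im, mul_zero, zero_mul, mul_one, add_zero, zero_add, sub_zero, zero_sub] at this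
    nlinarith [mul_nonneg hc hM₁.le, mul_nonneg hs hM₂.le]
  have hcs : (Real.sin α : ℂ) ^ 2 = 1 - (Real.cos α : ℂ) ^ 2 := by
    exact_mod_cast congrArg Complex.ofReal (Real.sin_sq α)
  have key : 1 - ((Real.sin α : ℂ) ^ 2 * s₁ + (Real.cos α : ℂ) ^ 2 * s₂) =
      2 * (Complex.I * ((Real.cos α : ℂ) ^ 2 * M₁ + (Real.sin α : ℂ) ^ 2 * M₂) - 1) /
        ((M₁ + Complex.I) * (M₂ + Complex.I)) := by
    rw [hs₁, hs₂, hcs]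
    field_simp
    linear_combination (2:ℂ) * Complex.I_sq
  have h4 : 1 - ((Real.sin α : ℂ) ^ 2 * s₁ + (Real.cos α : ℂ) ^ 2 * s₂) ≠ 0 := by
    rw [key]
    exact div_ne_zero (by simpa using hN) (mul_ne_zero h1 h2)
  refine ⟨h1, h2, h3, h4, ?_⟩
  rw [div_eq_div_iff h3 h4, hs₁, hs₂, hcs]
  field_simp
  ring
end

section
/- If S₁ ∈ 𝔖 and S₂ ∈ 𝔖, then the pointwise product S₁·S₂ belongs to 𝔖. -/
noncomputable section

/-- The open upper half-plane `ℂ₊`. -/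
def upperHalf : Set ℂ := {z : ℂ | 0 < z.im}

/-- The sector `{z : ε ≤ arg z ≤ π − ε}`. -/
def sector (ε : ℝ) : Set ℂ := {z : ℂ | ε ≤ Complex.arg z ∧ Complex.arg z ≤ Real.pi - ε}

/-- The filter describing `|z| → ∞` within the sector `{ε ≤ arg z ≤ π − ε}`. -/
def sectorAtInfty (ε : ℝ) : Filter ℂ :=
  (Filter.comap (fun z : ℂ => ‖z‖) Filter.atTop) ⊓ Filter.principal (sector ε)

/-- The class `𝔠` of Livšic functions: holomorphic maps `s : ℂ₊ → 𝔻` with `s(i) = 0` such that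
for every unimodular `θ`, `|z|·|s(z) − θ| → ∞` as `|z| → ∞` in every sector
`{ε ≤ arg z ≤ π − ε}`, `ε > 0`. -/
def MemLivsicClass (s : ℂ → ℂ) : Prop :=
  DifferentiableOn ℂ s upperHalf ∧
  (∀ z ∈ upperHalf, ‖s z‖ < 1) ∧
  s Complex.I = 0 ∧
  ∀ θ : ℂ, ‖θ‖ = 1 → ∀ ε : ℝ, 0 < ε →
    Filter.Tendsto (fun z => ‖z‖ * ‖s z - θ‖) (sectorAtInfty ε)
      Filter.atTop

/-- The class `𝔖` of characteristic functions: the functions of the form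
`S(z) = (s(z) − κ)/(κ̄ s(z) − 1)` on `ℂ₊` with `s ∈ 𝔠` and `κ ∈ 𝔻`. -/
def MemCharClass (S : ℂ → ℂ) : Prop :=
  ∃ (s : ℂ → ℂ) (κ : ℂ), MemLivsicClass s ∧ ‖κ‖ < 1 ∧
    ∀ z ∈ upperHalf, S z = (s z - κ) / ((starRingEnd ℂ) κ * s z - 1)

/-!
Write `S = (s - κ)/(κ̄ s - 1)`. The map `w ↦ (w - κ)/(κ̄ w - 1)` is an involution of the disk
which preserves the unit circle and is bi-Lipschitz on the closed disk, so `S ∈ 𝔖` exactly when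
`S` is a holomorphic map `ℂ₊ → 𝔻` with `|z|·|S(z) − θ| → ∞` in sectors (take `κ = S(i)`).
For a product `S₁ S₂` it therefore suffices to show this growth condition. If it failed along
`z_n → ∞` in a sector, then `|z_n|(1 − |S₁(z_n)|) ≤ |z_n|·|S₁S₂(z_n) − θ|` would stay bounded.
Passing to a subsequence with `S₁(z_n) → α`, `|α| = 1`, the Schwarz–Pick inequality on `ℂ₊`
(in Julia's horocyclic form) bounds `|z_n|·|S₁(z_n) − α|`, contradicting `S₁ ∈ 𝔖`.
-/

open Complex ComplexConjugate Filter Set Metric Topology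

def diskAut (κ w : ℂ) : ℂ := (w - κ) / (conj κ * w - 1)

section DiskAut

variable {κ w w' : ℂ}

@[simp] lemma diskAut_self (κ : ℂ) : diskAut κ κ = 0 := by simp [diskAut]

lemma normSq_conj_mul_sub_one (κ w : ℂ) :
    normSq (conj κ * w - 1) = normSq (w - κ) + (1 - normSq κ) * (1 - normSq w) := by
  simp only [normSq_apply, mul_re, mul_im, sub_re, sub_im, conj_re, conj_im, one_re, one_im]
  ring

lemma normSq_lt_one {z : ℂ} (hz : ‖z‖ < 1) : normSq z < 1 := by
  rw [normSq_eq_norm_sq]; exact pow_lt_one₀ (norm_nonneg z) hz two_ne_zero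

lemma normSq_le_one {z : ℂ} (hz : ‖z‖ ≤ 1) : normSq z ≤ 1 := by
  rw [normSq_eq_norm_sq]; exact pow_le_one₀ (norm_nonneg z) hz

lemma conj_mul_sub_one_ne_zero (hκ : ‖κ‖ < 1) (hw : ‖w‖ ≤ 1) : conj κ * w - 1 ≠ 0 := by
  refine sub_ne_zero.2 fun h => ?_
  have : ‖conj κ * w‖ < 1 := by
    rw [norm_mul, norm_conj]
    exact mul_lt_one_of_nonneg_of_lt_one_left (norm_nonneg κ) hκ hw
  simp [h] at this

lemma norm_diskAut_lt_one (hκ : ‖κ‖ < 1) (hw : ‖w‖ < 1) : ‖diskAut κ w‖ < 1 := by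
  rw [diskAut, norm_div, div_lt_one (norm_pos_iff.2 (conj_mul_sub_one_ne_zero hκ hw.le)),
    norm_def, norm_def]
  refine Real.sqrt_lt_sqrt (normSq_nonneg _) ?_
  rw [normSq_conj_mul_sub_one]
  have := mul_pos (sub_pos.2 (normSq_lt_one hκ)) (sub_pos.2 (normSq_lt_one hw))
  linarith

lemma norm_diskAut_of_norm_eq_one (hκ : ‖κ‖ < 1) (hw : ‖w‖ = 1) : ‖diskAut κ w‖ = 1 := by
  rw [diskAut, norm_div, div_eq_one_iff_eq (norm_ne_zero_iff.2 (conj_mul_sub_one_ne_zero hκ hw.le)),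
    norm_def, norm_def, normSq_conj_mul_sub_one, normSq_eq_norm_sq w, hw]
  ring_nf

lemma norm_diskAut_le_one (hκ : ‖κ‖ < 1) (hw : ‖w‖ ≤ 1) : ‖diskAut κ w‖ ≤ 1 :=
  hw.lt_or_eq.elim (fun h => (norm_diskAut_lt_one hκ h).le)
    fun h => (norm_diskAut_of_norm_eq_one hκ h).le

lemma diskAut_diskAut (hκ : ‖κ‖ < 1) (hw : ‖w‖ ≤ 1) : diskAut κ (diskAut κ w) = w := by
  have hd := conj_mul_sub_one_ne_zero hκ hw
  have hd' := conj_mul_sub_one_ne_zero hκ (norm_diskAut_le_one hκ hw)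
  rw [diskAut, div_eq_iff hd']
  simp only [diskAut]
  rw [div_sub' hd, mul_div_assoc', div_sub' hd, mul_div_assoc']
  congr 1
  ring

lemma diskAut_sub_diskAut (hd : conj κ * w - 1 ≠ 0) (hd' : conj κ * w' - 1 ≠ 0) :
    diskAut κ w - diskAut κ w' =
      (normSq κ - 1) * (w - w') / ((conj κ * w - 1) * (conj κ * w' - 1)) := by
  rw [diskAut, diskAut, div_sub_div _ _ hd hd', ← mul_conj]
  ring

lemma norm_conj_mul_sub_one_le_two (hκ : ‖κ‖ ≤ 1) (hw : ‖w‖ ≤ 1) : ‖conj κ * w - 1‖ ≤ 2 :=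
  calc ‖conj κ * w - 1‖ ≤ ‖κ‖ * ‖w‖ + 1 := by simpa using norm_sub_le (conj κ * w) 1
    _ ≤ 2 := by nlinarith [norm_nonneg κ]

lemma mul_norm_sub_le_norm_diskAut_sub (hκ : ‖κ‖ < 1) (hw : ‖w‖ ≤ 1) (hw' : ‖w'‖ ≤ 1) :
    (1 - ‖κ‖ ^ 2) / 4 * ‖w - w'‖ ≤ ‖diskAut κ w - diskAut κ w'‖ := by
  have hd := conj_mul_sub_one_ne_zero hκ hw
  have hd' := conj_mul_sub_one_ne_zero hκ hw'
  have hnum : ‖(normSq κ : ℂ) - 1‖ = 1 - ‖κ‖ ^ 2 := by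
    rw [← norm_neg, neg_sub, ← ofReal_one, ← ofReal_sub, norm_real, Real.norm_eq_abs,
      abs_of_nonneg (sub_nonneg.2 (normSq_lt_one hκ).le), normSq_eq_norm_sq]
  have hprod : ‖conj κ * w - 1‖ * ‖conj κ * w' - 1‖ ≤ 4 := by
    nlinarith [norm_conj_mul_sub_one_le_two hκ.le hw, norm_conj_mul_sub_one_le_two hκ.le hw',
      norm_nonneg (conj κ * w - 1), norm_nonneg (conj κ * w' - 1)]
  rw [diskAut_sub_diskAut hd hd', norm_div, norm_mul, norm_mul, hnum, div_mul_eq_mul_div]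
  gcongr
  exact mul_nonneg (sub_nonneg.2 (pow_le_one₀ (norm_nonneg κ) hκ.le)) (norm_nonneg _)

lemma norm_conj_mul_sub_one_eq {α : ℂ} (hα : ‖α‖ = 1) (x : ℂ) : ‖conj α * x - 1‖ = ‖x - α‖ := by
  have : conj α * α = 1 := by rw [conj_mul', hα]; norm_num
  rw [← this, ← mul_sub, norm_mul, norm_conj, hα, one_mul]

lemma DifferentiableOn.diskAut_comp {f : ℂ → ℂ} {U : Set ℂ} (hκ : ‖κ‖ < 1)
    (hfd : DifferentiableOn ℂ f U) (hfb : ∀ z ∈ U, ‖f z‖ < 1) :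
    DifferentiableOn ℂ (fun z => diskAut κ (f z)) U :=
  (hfd.sub_const κ).div ((hfd.const_mul _).sub_const 1) fun z hz =>
    conj_mul_sub_one_ne_zero hκ (hfb z hz).le

end DiskAut

section Sector

variable {ε : ℝ} {z : ℂ}

lemma ne_zero_of_mem_sector (hε : 0 < ε) (hz : z ∈ sector ε) : z ≠ 0 := by
  rintro rfl
  have := hz.1
  rw [arg_zero] at this
  linarith

lemma sin_pos_of_mem_sector (hε : 0 < ε) (hz : z ∈ sector ε) : 0 < Real.sin ε :=
  Real.sin_pos_of_pos_of_lt_pi hε (by linarith [hz.1.trans hz.2, Real.pi_pos])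

lemma sin_mul_norm_le_im_of_mem_sector (hε : 0 < ε) (hz : z ∈ sector ε) :
    Real.sin ε * ‖z‖ ≤ z.im := by
  obtain ⟨h₁, h₂⟩ := hz
  have hsin : Real.sin ε ≤ Real.sin (arg z) := by
    rcases le_or_gt (arg z) (Real.pi / 2) with h | h
    · exact Real.sin_le_sin_of_le_of_le_pi_div_two (by linarith) h h₁
    · rw [← Real.sin_pi_sub (arg z)]
      exact Real.sin_le_sin_of_le_of_le_pi_div_two (by linarith) (by linarith) (by linarith)
  rw [← norm_mul_sin_arg z, mul_comm]
  exact mul_le_mul_of_nonneg_left hsin (norm_nonneg z)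

lemma sector_subset_upperHalf (hε : 0 < ε) : sector ε ⊆ upperHalf := fun _ hz =>
  (mul_pos (sin_pos_of_mem_sector hε hz) (norm_pos_iff.2 (ne_zero_of_mem_sector hε hz))).trans_le
    (sin_mul_norm_le_im_of_mem_sector hε hz)

lemma eventually_mem_sector (ε : ℝ) : ∀ᶠ z in sectorAtInfty ε, z ∈ sector ε :=
  mem_inf_of_right (mem_principal_self _)

end Sector

section SchwarzPick

variable {f : ℂ → ℂ} {z w : ℂ}

def cayleyAt (w ξ : ℂ) : ℂ := (w - conj w * ξ) / (1 - ξ)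

lemma one_sub_ne_zero_of_norm_lt_one {ξ : ℂ} (hξ : ‖ξ‖ < 1) : 1 - ξ ≠ 0 := by
  intro h
  rw [← sub_eq_zero.1 h, norm_one] at hξ
  exact lt_irrefl _ hξ

lemma im_cayleyAt (w ξ : ℂ) :
    (cayleyAt w ξ).im = w.im * (1 - normSq ξ) / normSq (1 - ξ) := by
  rw [cayleyAt, div_im, div_sub_div_same]
  congr 1
  simp only [mul_im, mul_re, sub_im, sub_re, conj_re, conj_im, normSq_apply, one_re, one_im]
  ring

lemma cayleyAt_mem_upperHalf (hw : w ∈ upperHalf) {ξ : ℂ} (hξ : ‖ξ‖ < 1) :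
    cayleyAt w ξ ∈ upperHalf := by
  change 0 < (cayleyAt w ξ).im
  rw [im_cayleyAt]
  exact div_pos (mul_pos hw (sub_pos.2 (normSq_lt_one hξ)))
    (normSq_pos.2 (one_sub_ne_zero_of_norm_lt_one hξ))

lemma differentiableOn_cayleyAt (w : ℂ) : DifferentiableOn ℂ (cayleyAt w) (ball 0 1) :=
  ((differentiableOn_const w).sub (differentiableOn_id.const_mul _)).div
    ((differentiableOn_const 1).sub differentiableOn_id) fun _ hξ =>
      one_sub_ne_zero_of_norm_lt_one (mem_ball_zero_iff.1 hξ)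

lemma sub_conj_ne_zero (hz : z ∈ upperHalf) (hw : w ∈ upperHalf) : z - conj w ≠ 0 := by
  intro h
  have := congrArg im h
  simp only [sub_im, conj_im, zero_im] at this
  linarith [show 0 < z.im from hz, show 0 < w.im from hw]

lemma normSq_sub_conj (z w : ℂ) : normSq (z - conj w) = normSq (z - w) + 4 * z.im * w.im := by
  simp only [normSq_apply, sub_re, sub_im, conj_re, conj_im]
  ring

lemma norm_div_sub_conj_lt_one (hz : z ∈ upperHalf) (hw : w ∈ upperHalf) :
    ‖(z - w) / (z - conj w)‖ < 1 := by
  rw [norm_div, div_lt_one (norm_pos_iff.2 (sub_conj_ne_zero hz hw)), norm_def, norm_def]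
  refine Real.sqrt_lt_sqrt (normSq_nonneg _) ?_
  rw [normSq_sub_conj]
  have : 0 < z.im * w.im := mul_pos hz hw
  linarith

lemma cayleyAt_div_sub_conj (hz : z ∈ upperHalf) (hw : w ∈ upperHalf) :
    cayleyAt w ((z - w) / (z - conj w)) = z := by
  have hzw := sub_conj_ne_zero hz hw
  have hww := sub_conj_ne_zero hw hw
  rw [cayleyAt, div_eq_iff (one_sub_ne_zero_of_norm_lt_one (norm_div_sub_conj_lt_one hz hw))]
  field_simp
  ring

/-- The Schwarz–Pick lemma for holomorphic maps `ℂ₊ → 𝔻`. -/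
lemma norm_diskAut_le_of_upperHalf (hd : DifferentiableOn ℂ f upperHalf)
    (hb : ∀ z ∈ upperHalf, ‖f z‖ < 1) (hz : z ∈ upperHalf) (hw : w ∈ upperHalf) :
    ‖diskAut (f w) (f z)‖ ≤ ‖(z - w) / (z - conj w)‖ := by
  have hmaps : ∀ ξ ∈ ball (0 : ℂ) 1, cayleyAt w ξ ∈ upperHalf := fun ξ hξ =>
    cayleyAt_mem_upperHalf hw (mem_ball_zero_iff.1 hξ)
  have hg : DifferentiableOn ℂ (fun ξ => diskAut (f w) (f (cayleyAt w ξ))) (ball 0 1) :=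
    ((hd.comp (differentiableOn_cayleyAt w) hmaps).diskAut_comp (hb w hw)) fun ξ hξ =>
      hb _ (hmaps ξ hξ)
  have := Complex.norm_le_norm_of_mapsTo_ball hg
    (fun ξ hξ => mem_closedBall_zero_iff.2 (norm_diskAut_lt_one (hb w hw) (hb _ (hmaps ξ hξ))).le)
    (by simp [cayleyAt]) (norm_div_sub_conj_lt_one hz hw)
  rwa [cayleyAt_div_sub_conj hz hw] at this

/-- Julia's horocyclic form of the Schwarz–Pick lemma. -/
lemma normSq_mul_im_mul_im_le (hd : DifferentiableOn ℂ f upperHalf)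
    (hb : ∀ z ∈ upperHalf, ‖f z‖ < 1) (hz : z ∈ upperHalf) (hw : w ∈ upperHalf) :
    normSq (conj (f w) * f z - 1) * (4 * z.im * w.im) ≤
      normSq (z - conj w) * ((1 - normSq (f w)) * (1 - normSq (f z))) := by
  have hD := conj_mul_sub_one_ne_zero (hb w hw) (hb z hz).le
  have hsp := norm_diskAut_le_of_upperHalf hd hb hz hw
  rw [diskAut, norm_div, norm_div, div_le_div_iff₀ (norm_pos_iff.2 hD)
    (norm_pos_iff.2 (sub_conj_ne_zero hz hw)), norm_def, norm_def, norm_def, norm_def,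
    ← Real.sqrt_mul (normSq_nonneg _), ← Real.sqrt_mul (normSq_nonneg _),
    Real.sqrt_le_sqrt_iff (mul_nonneg (normSq_nonneg _) (normSq_nonneg _))] at hsp
  rw [normSq_conj_mul_sub_one, normSq_sub_conj] at hsp ⊢
  linarith

end SchwarzPick

def LivsicGrowth (f : ℂ → ℂ) : Prop :=
  ∀ θ : ℂ, ‖θ‖ = 1 → ∀ ε : ℝ, 0 < ε →
    Tendsto (fun z => ‖z‖ * ‖f z - θ‖) (sectorAtInfty ε) atTop

section Julia

variable {f : ℂ → ℂ} {ε C : ℝ}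

lemma mul_one_sub_normSq_le {r : ℝ} {x : ℂ} (hr : 0 ≤ r) (hx : ‖x‖ ≤ 1)
    (h : r * (1 - ‖x‖) ≤ C) : r * (1 - normSq x) ≤ 2 * C := by
  rw [normSq_eq_norm_sq]
  nlinarith [mul_nonneg (mul_nonneg hr (sub_nonneg.2 hx)) (sub_nonneg.2 hx)]

lemma normSq_sub_conj_le {u v : ℂ} (huv : ‖u‖ ≤ ‖v‖) : normSq (u - conj v) ≤ 4 * ‖v‖ ^ 2 := by
  have := norm_sub_le u (conj v)
  rw [norm_conj] at this
  rw [normSq_eq_norm_sq]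
  nlinarith [norm_nonneg (u - conj v)]

lemma norm_mul_norm_conj_mul_sub_one_le (hd : DifferentiableOn ℂ f upperHalf)
    (hb : ∀ z ∈ upperHalf, ‖f z‖ < 1) (hε : 0 < ε) {u v : ℂ} (hu : u ∈ sector ε)
    (hv : v ∈ sector ε) (huv : ‖u‖ ≤ ‖v‖) (hCu : ‖u‖ * (1 - ‖f u‖) ≤ C)
    (hCv : ‖v‖ * (1 - ‖f v‖) ≤ C) :
    ‖u‖ * ‖conj (f v) * f u - 1‖ ≤ 2 * C / Real.sin ε := by
  set s := Real.sin ε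
  set P := normSq (conj (f v) * f u - 1)
  have hs : 0 < s := sin_pos_of_mem_sector hε hu
  have hu₀ : 0 < ‖u‖ := norm_pos_iff.2 (ne_zero_of_mem_sector hε hu)
  have hv₀ : 0 < ‖v‖ := huv.trans_lt' hu₀
  have hu' := sector_subset_upperHalf hε hu
  have hv' := sector_subset_upperHalf hε hv
  have ha : 0 ≤ 1 - normSq (f u) := sub_nonneg.2 (normSq_le_one (hb u hu').le)
  have hb' : 0 ≤ 1 - normSq (f v) := sub_nonneg.2 (normSq_le_one (hb v hv').le)
  have hau := mul_one_sub_normSq_le hu₀.le (hb u hu').le hCu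
  have hbv := mul_one_sub_normSq_le hv₀.le (hb v hv').le hCv
  have hC : 0 ≤ 2 * C := (mul_nonneg hu₀.le ha).trans hau
  have him : s * ‖u‖ * (s * ‖v‖) ≤ u.im * v.im :=
    mul_le_mul (sin_mul_norm_le_im_of_mem_sector hε hu) (sin_mul_norm_le_im_of_mem_sector hε hv)
      (by positivity) hu'.le
  have hhoro := normSq_mul_im_mul_im_le hd hb hu' hv'
  have hsq : (s * (‖u‖ * ‖conj (f v) * f u - 1‖)) ^ 2 * (4 * ‖v‖) ≤ (2 * C) ^ 2 * (4 * ‖v‖) :=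
    calc _ = ‖u‖ * (P * (4 * (s * ‖u‖) * (s * ‖v‖))) := by simp only [P, normSq_eq_norm_sq]; ring
      _ ≤ ‖u‖ * (4 * ‖v‖ ^ 2 * ((1 - normSq (f v)) * (1 - normSq (f u)))) := by
        refine mul_le_mul_of_nonneg_left ?_ hu₀.le
        calc P * (4 * (s * ‖u‖) * (s * ‖v‖)) ≤ P * (4 * u.im * v.im) := by
              have := normSq_nonneg (conj (f v) * f u - 1)
              nlinarith
          _ ≤ _ := hhoro
          _ ≤ _ := mul_le_mul_of_nonneg_right (normSq_sub_conj_le huv) (mul_nonneg hb' ha)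
      _ = 4 * ‖v‖ * ((‖v‖ * (1 - normSq (f v))) * (‖u‖ * (1 - normSq (f u)))) := by ring
      _ ≤ 4 * ‖v‖ * (2 * C * (2 * C)) := by gcongr
      _ = (2 * C) ^ 2 * (4 * ‖v‖) := by ring
  have := (pow_le_pow_iff_left₀ (by positivity) hC two_ne_zero).1
    (le_of_mul_le_mul_right hsq (by positivity))
  rw [le_div_iff₀ hs]
  linarith

lemma norm_mul_norm_sub_le_of_tendsto (hd : DifferentiableOn ℂ f upperHalf)
    (hb : ∀ z ∈ upperHalf, ‖f z‖ < 1) (hε : 0 < ε) {w : ℕ → ℂ} {α : ℂ} (hα : ‖α‖ = 1)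
    (hw : ∀ n, w n ∈ sector ε) (hwC : ∀ n, ‖w n‖ * (1 - ‖f (w n)‖) ≤ C)
    (hw_top : Tendsto (fun n => ‖w n‖) atTop atTop)
    (hfw : Tendsto (fun n => f (w n)) atTop (𝓝 α)) (n : ℕ) :
    ‖w n‖ * ‖f (w n) - α‖ ≤ 2 * C / Real.sin ε := by
  rw [← norm_conj_mul_sub_one_eq hα]
  have hlim : Tendsto (fun k => ‖w n‖ * ‖conj (f (w k)) * f (w n) - 1‖) atTop
      (𝓝 (‖w n‖ * ‖conj α * f (w n) - 1‖)) :=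
    tendsto_const_nhds.mul ((((continuous_conj.tendsto α).comp hfw).mul_const _).sub_const 1).norm
  refine le_of_tendsto hlim ?_
  filter_upwards [hw_top.eventually_ge_atTop ‖w n‖] with k hk
  exact norm_mul_norm_conj_mul_sub_one_le hd hb hε (hw n) (hw k) hk (hwC n) (hwC k)

end Julia

section Growth

variable {f g : ℂ → ℂ} {κ : ℂ}

lemma LivsicGrowth.congr (hf : LivsicGrowth f) (hfg : EqOn f g upperHalf) : LivsicGrowth g :=
  fun θ hθ ε hε => (hf θ hθ ε hε).congr' <| (eventually_mem_sector ε).mono fun _ hz => by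
    rw [hfg (sector_subset_upperHalf hε hz)]

lemma LivsicGrowth.diskAut_comp (hκ : ‖κ‖ < 1) (hfb : ∀ z ∈ upperHalf, ‖f z‖ < 1)
    (hf : LivsicGrowth f) : LivsicGrowth fun z => diskAut κ (f z) := by
  intro θ hθ ε hε
  have hθ' : ‖diskAut κ θ‖ = 1 := norm_diskAut_of_norm_eq_one hκ hθ
  have hc : 0 < (1 - ‖κ‖ ^ 2) / 4 := by
    have := pow_lt_one₀ (norm_nonneg κ) hκ two_ne_zero
    linarith
  refine tendsto_atTop_mono' _ ?_ ((hf _ hθ' ε hε).const_mul_atTop hc)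
  filter_upwards [eventually_mem_sector ε] with z hz
  have hfz := (hfb z (sector_subset_upperHalf hε hz)).le
  calc (1 - ‖κ‖ ^ 2) / 4 * (‖z‖ * ‖f z - diskAut κ θ‖)
      = ‖z‖ * ((1 - ‖κ‖ ^ 2) / 4 * ‖f z - diskAut κ θ‖) := by ring
    _ ≤ ‖z‖ * ‖diskAut κ (f z) - diskAut κ (diskAut κ θ)‖ := by
      gcongr
      exact mul_norm_sub_le_norm_diskAut_sub hκ hfz hθ'.le
    _ = ‖z‖ * ‖diskAut κ (f z) - θ‖ := by rw [diskAut_diskAut hκ hθ.le]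

lemma one_sub_norm_le_norm_mul_sub {x y θ : ℂ} (hy : ‖y‖ ≤ 1) (hθ : ‖θ‖ = 1) :
    1 - ‖x‖ ≤ ‖x * y - θ‖ :=
  calc 1 - ‖x‖ ≤ ‖θ‖ - ‖x * y‖ := by
        rw [hθ, norm_mul]
        nlinarith [norm_nonneg x]
    _ ≤ ‖θ - x * y‖ := norm_sub_norm_le _ _
    _ = ‖x * y - θ‖ := norm_sub_rev _ _

lemma tendsto_nhds_one_of_mul_one_sub_le {a r : ℕ → ℝ} (ha : Tendsto a atTop atTop)
    (hr : ∀ n, r n ≤ 1) (hC : ∀ n, a n * (1 - r n) ≤ C) : Tendsto r atTop (𝓝 1) := by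
  have hsub : Tendsto (fun n => 1 - r n) atTop (𝓝 0) := by
    refine squeeze_zero' (g := fun n => C / a n)
      (Eventually.of_forall fun n => sub_nonneg.2 (hr n)) ?_ (tendsto_const_nhds.div_atTop ha)
    filter_upwards [ha.eventually_gt_atTop 0] with n hn
    rw [le_div_iff₀ hn, mul_comm]
    exact hC n
  simpa using (tendsto_const_nhds (x := (1 : ℝ))).sub hsub

lemma LivsicGrowth.mul (hfd : DifferentiableOn ℂ f upperHalf)
    (hfb : ∀ z ∈ upperHalf, ‖f z‖ < 1) (hgb : ∀ z ∈ upperHalf, ‖g z‖ < 1)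
    (hf : LivsicGrowth f) : LivsicGrowth fun z => f z * g z := by
  intro θ hθ ε hε
  by_contra hcon
  obtain ⟨C, hC⟩ : ∃ C, ∃ᶠ z in sectorAtInfty ε, ‖z‖ * ‖f z * g z - θ‖ < C := by
    simpa [Filter.tendsto_atTop, not_forall, not_le, Filter.not_eventually] using hcon
  rw [sectorAtInfty, frequently_inf_principal] at hC
  obtain ⟨w, hw_top, hw⟩ := exists_seq_forall_of_frequently hC
  have hw_norm : Tendsto (fun n => ‖w n‖) atTop atTop := tendsto_comap_iff.1 hw_top
  have hwu n : w n ∈ upperHalf := sector_subset_upperHalf hε (hw n).1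
  have hwC n : ‖w n‖ * (1 - ‖f (w n)‖) ≤ C :=
    (mul_le_mul_of_nonneg_left (one_sub_norm_le_norm_mul_sub (hgb _ (hwu n)).le hθ)
      (norm_nonneg _)).trans (hw n).2.le
  obtain ⟨α, -, φ, hφ, hfφ⟩ := tendsto_subseq_of_bounded (isBounded_closedBall (x := 0) (r := 1))
    fun n => mem_closedBall_zero_iff.2 (hfb _ (hwu n)).le
  have hα : ‖α‖ = 1 := tendsto_nhds_unique hfφ.norm <|
    (tendsto_nhds_one_of_mul_one_sub_le hw_norm (fun n => (hfb _ (hwu n)).le) hwC).comp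
      hφ.tendsto_atTop
  have hwφ : Tendsto (w ∘ φ) atTop (sectorAtInfty ε) :=
    tendsto_inf.2 ⟨hw_top.comp hφ.tendsto_atTop,
      tendsto_principal.2 (Eventually.of_forall fun n => (hw (φ n)).1)⟩
  obtain ⟨n, hn⟩ := ((hf α hα ε hε).comp hwφ |>.eventually_gt_atTop (2 * C / Real.sin ε)).exists
  exact hn.not_ge <| norm_mul_norm_sub_le_of_tendsto hfd hfb hε hα (fun n => (hw (φ n)).1)
    (fun n => hwC (φ n)) (hw_norm.comp hφ.tendsto_atTop) hfφ n

end Growth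

lemma I_mem_upperHalf : I ∈ upperHalf := by simp [upperHalf]

theorem memCharClass_iff {S : ℂ → ℂ} : MemCharClass S ↔
    DifferentiableOn ℂ S upperHalf ∧ (∀ z ∈ upperHalf, ‖S z‖ < 1) ∧ LivsicGrowth S := by
  constructor
  · rintro ⟨s, κ, ⟨hsd, hsb, -, hsg⟩, hκ, hS⟩
    refine ⟨(hsd.diskAut_comp hκ hsb).congr hS, fun z hz => ?_,
      (LivsicGrowth.diskAut_comp hκ hsb hsg).congr fun z hz => (hS z hz).symm⟩
    rw [hS z hz]
    exact norm_diskAut_lt_one hκ (hsb z hz)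
  · rintro ⟨hd, hb, hg⟩
    have hκ := hb I I_mem_upperHalf
    exact ⟨fun z => diskAut (S I) (S z), S I,
      ⟨hd.diskAut_comp hκ hb, fun z hz => norm_diskAut_lt_one hκ (hb z hz), diskAut_self _,
        hg.diskAut_comp hκ hb⟩, hκ, fun z hz => (diskAut_diskAut hκ (hb z hz).le).symm⟩

/-- The class `𝔖` is closed under pointwise multiplication. -/
theorem statement13 (S₁ S₂ : ℂ → ℂ) (h₁ : MemCharClass S₁) (h₂ : MemCharClass S₂) :
    MemCharClass (fun z => S₁ z * S₂ z) := by
  obtain ⟨hd₁, hb₁, hg₁⟩ := memCharClass_iff.1 h₁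
  obtain ⟨hd₂, hb₂, -⟩ := memCharClass_iff.1 h₂
  refine memCharClass_iff.2 ⟨hd₁.mul hd₂, fun z hz => ?_, hg₁.mul hd₁ hb₁ hb₂⟩
  rw [norm_mul]
  exact mul_lt_one_of_nonneg_of_lt_one_left (norm_nonneg _) (hb₁ z hz) (hb₂ z hz).le
end
end

section
/- Let ℓ > 0 and let z ∈ ℂ with Im z > 0. Then the integrals below are well defined, the denominators are nonzero, and ((z−i)/(z+i)) · e^{ℓ} · (∫₀^ℓ e^{(−iz−1)x} dx) / (∫₀^ℓ e^{(−iz+1)x} dx) = (e^{iℓz} − e^{−ℓ}) / (e^{−ℓ} e^{iℓz} − 1). (This is the Livšic function of the symmetric first-order differentiation operator on (0, ℓ) with Dirichlet conditions at both endpoints relative to the antiperiodic self-adjoint extension.) -/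
/-! With `a = -i z` both integrals are elementary,
`(a ± 1) ∫₀^ℓ e^{(a ± 1)x} dx = e^{(a ± 1)ℓ} - 1`, and `(z - i)/(z + i) = (a - 1)/(a + 1)`,
so the prefactor cancels the factors `a ± 1` and what remains is a rational identity in
`e^{iℓz}` and `e^ℓ`. Everything that must not vanish reduces to `e^{bℓ} ≠ 1` with `Re b ≠ 0`, which holds because `|e^{bℓ}| = e^{ℓ Re b}`. -/

open Complex intervalIntegral

theorem mul_integral_exp_mul (a : ℂ) (l : ℝ) :
    a * ∫ x : ℝ in (0 : ℝ)..l, exp (a * x) = exp (a * l) - 1 := by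
  rcases eq_or_ne a 0 with rfl | ha
  · simp
  · rw [integral_exp_mul_complex ha, ofReal_zero, mul_zero, exp_zero, mul_div_cancel₀ _ ha]

theorem exp_mul_ofReal_ne_one {a : ℂ} {l : ℝ} (ha : a.re ≠ 0) (hl : l ≠ 0) :
    exp (a * l) ≠ 1 := by
  intro h
  have := congrArg (‖·‖) h
  simp only [norm_exp, re_mul_ofReal, norm_one, Real.exp_eq_one_iff] at this
  exact mul_ne_zero ha hl this

theorem integral_exp_mul_ne_zero {a : ℂ} {l : ℝ} (ha : a.re ≠ 0) (hl : l ≠ 0) :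
    ∫ x : ℝ in (0 : ℝ)..l, exp (a * x) ≠ 0 := fun h =>
  exp_mul_ofReal_ne_one ha hl <| sub_eq_zero.mp <| by rw [← mul_integral_exp_mul, h, mul_zero]

theorem sub_one_div_add_one_mul_integral_exp_div (a : ℂ) (l : ℝ) :
    (a - 1) / (a + 1) * ((∫ x : ℝ in (0 : ℝ)..l, exp ((a - 1) * x)) /
      ∫ x : ℝ in (0 : ℝ)..l, exp ((a + 1) * x)) =
    (exp ((a - 1) * l) - 1) / (exp ((a + 1) * l) - 1) := by
  rw [div_mul_div_comm, mul_integral_exp_mul, mul_integral_exp_mul]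

theorem sub_I_div_add_I (z : ℂ) : (z - I) / (z + I) = (-I * z - 1) / (-I * z + 1) := by
  rw [← mul_div_mul_left _ _ (neg_ne_zero.mpr I_ne_zero)]
  congr 1
  · linear_combination I_sq
  · linear_combination -I_sq

theorem mul_inv_mul_inv_sub_one_div_eq {K : Type*} [Field K] {q E : K} (hq : q ≠ 0)
    (hE : E ≠ 0) (hqE : q ≠ E) :
    E * (q⁻¹ * E⁻¹ - 1) / (q⁻¹ * E - 1) = (q - E⁻¹) / (E⁻¹ * q - 1) := by
  have : q - E ≠ 0 := sub_ne_zero.mpr hqE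
  have : E - q ≠ 0 := sub_ne_zero.mpr hqE.symm
  field_simp
  ring

/-- The Livšic function of the differentiation operator on `(0, ℓ)`:
for `ℓ > 0` and `Im z > 0`,
`((z−i)/(z+i)) e^{ℓ} (∫₀^ℓ e^{(−iz−1)x} dx)/(∫₀^ℓ e^{(−iz+1)x} dx)
  = (e^{iℓz} − e^{−ℓ})/(e^{−ℓ} e^{iℓz} − 1)`. -/
theorem statement18 (l : ℝ) (hl : 0 < l) (z : ℂ) (hz : 0 < z.im) :
    IntervalIntegrable (fun x : ℝ => Complex.exp ((-Complex.I * z - 1) * x))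
      MeasureTheory.volume 0 l ∧
    IntervalIntegrable (fun x : ℝ => Complex.exp ((-Complex.I * z + 1) * x))
      MeasureTheory.volume 0 l ∧
    z + Complex.I ≠ 0 ∧
    (∫ x : ℝ in (0 : ℝ)..l, Complex.exp ((-Complex.I * z + 1) * x)) ≠ 0 ∧
    Complex.exp (-(l : ℂ)) * Complex.exp (Complex.I * l * z) - 1 ≠ 0 ∧
    (z - Complex.I) / (z + Complex.I) * (Real.exp l : ℂ) *
        ((∫ x : ℝ in (0 : ℝ)..l, Complex.exp ((-Complex.I * z - 1) * x)) /
          (∫ x : ℝ in (0 : ℝ)..l, Complex.exp ((-Complex.I * z + 1) * x))) =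
      (Complex.exp (Complex.I * l * z) - Complex.exp (-(l : ℂ))) /
        (Complex.exp (-(l : ℂ)) * Complex.exp (Complex.I * l * z) - 1) := by
  have hzI : z + I ≠ 0 := fun h => (by linarith : z.im + 1 ≠ 0) (by simpa using congrArg im h)
  have hD : exp (-(l : ℂ)) * exp (I * l * z) - 1 ≠ 0 := by
    rw [← exp_add, sub_ne_zero, show -(l : ℂ) + I * l * z = (I * z - 1) * l by ring]
    exact exp_mul_ofReal_ne_one (by simpa using (by linarith : -z.im - 1 ≠ 0)) hl.ne'
  refine ⟨(by fun_prop : Continuous _).intervalIntegrable _ _,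
    (by fun_prop : Continuous _).intervalIntegrable _ _, hzI,
    integral_exp_mul_ne_zero (by simpa using (by linarith : z.im + 1 ≠ 0)) hl.ne', hD, ?_⟩
  have hexp_sub : exp ((-I * z - 1) * l) = (exp (I * l * z))⁻¹ * (exp l)⁻¹ := by
    rw [← exp_neg, ← exp_neg, ← exp_add]; congr 1; ring
  have hexp_add : exp ((-I * z + 1) * l) = (exp (I * l * z))⁻¹ * exp l := by
    rw [← exp_neg, ← exp_add]; congr 1; ring
  calc _ = exp l * ((-I * z - 1) / (-I * z + 1) *
          ((∫ x : ℝ in (0 : ℝ)..l, exp ((-I * z - 1) * x)) /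
            ∫ x : ℝ in (0 : ℝ)..l, exp ((-I * z + 1) * x))) := by
        rw [sub_I_div_add_I, ofReal_exp]; ring
    _ = _ := by
        rw [sub_one_div_add_one_mul_integral_exp_div, hexp_sub, hexp_add, exp_neg,
          ← mul_div_assoc]
        refine mul_inv_mul_inv_sub_one_div_eq (exp_ne_zero _) (exp_ne_zero _) fun h => hD ?_
        rw [h, ← exp_add, neg_add_cancel, exp_zero, sub_self]
end
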